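/- If the Pontryagin stationarity condition holds at each step (Ru_k + λ_{k+1} = 0 with the costate recursion and terminal condition), then the control sequence satisfies the first-order difference equation u_{k} = u_{k-1} + R⁻¹∇f(x_k) for 1 ≤ k ≤ N, i.e., successive controls differ by R⁻¹ times the gradient at the current state. -/
import Mathlib


/-- Under the Pontryagin conditions, successive controls satisfy
    u_k = u_{k-1} + R⁻¹∇f(x_k) for 1 ≤ k ≤ N. -/
theorem control_difference_equation (n N : ℕ) (hN : 1 ≤ N)
    (f : EuclideanSpace ℝ (Fin n) → ℝ) (hf : ∀ y, DifferentiableAt ℝ f y)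
    (R : Matrix (Fin n) (Fin n) ℝ) (hR : R.PosDef)
    (x lam : ℕ → EuclideanSpace ℝ (Fin n)) (u : ℕ → Fin n → ℝ)
    (hdyn : ∀ k, (show Fin n → ℝ from x (k + 1)) = (show Fin n → ℝ from x k) + u k)
    (hcostate : ∀ k ≤ N, lam k = gradient f (x k) + lam (k + 1))
    (hterm : lam (N + 1) = gradient f (x (N + 1)))
    (hstat : ∀ k ≤ N, R.mulVec (u k) + (show Fin n → ℝ from lam (k + 1)) = 0) :
    ∀ k, 1 ≤ k → k ≤ N →
      u k = u (k - 1) + R⁻¹.mulVec (show Fin n → ℝ from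
        (gradient f (x k) : EuclideanSpace ℝ (Fin n))) := by
  intro k hk1 hkN
  have hRinv : IsUnit R.det := isUnit_iff_ne_zero.mpr hR.det_pos.ne'
  have hk' : k - 1 ≤ N := le_trans (Nat.sub_le k 1) hkN
  have hk1' : k - 1 + 1 = k := Nat.succ_pred_eq_of_pos hk1
  have h1 := hstat k hkN
  have h2 := hstat (k - 1) hk'
  rw [hk1'] at h2
  have h3 := hcostate k hkN
  -- R.mulVec (u k) = -(lam (k+1)), R.mulVec (u (k-1)) = -(lam k)
  have key : R.mulVec (u k - u (k - 1)) =
      (show Fin n → ℝ from (gradient f (x k) : EuclideanSpace ℝ (Fin n))) := by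
    rw [Matrix.mulVec_sub]
    have e1 : R.mulVec (u k) = -(show Fin n → ℝ from lam (k + 1)) := by
      have := h1; linear_combination (norm := module) this
    have e2 : R.mulVec (u (k - 1)) = -(show Fin n → ℝ from lam k) := by
      have := h2; linear_combination (norm := module) this
    rw [e1, e2, h3]
    funext i
    simp [PiLp.add_apply]
  have := congrArg (fun v => R⁻¹.mulVec v) key
  simp only [Matrix.mulVec_mulVec, Matrix.nonsing_inv_mul R hRinv, Matrix.one_mulVec] at this
  rw [← this]
  abel
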